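/- arXiv:2312.02285 — 6 statements merged into one kernel-verified Lean document; each statement's English description precedes it below -/
import Mathlib

section
/- The inclusion atom a ⊆ b (with |a| = |b| = n) is semantically equivalent to the conjunction over all x ∈ {⊤,⊥}^n of (¬a^x ∨ x ⊆ b), where a^x denotes α_1^{x_1} ∧ ... ∧ α_n^{x_n}. -/
structure KModel (W : Type) where
  R : W → W → Prop
  V : ℕ → Set W

inductive MF : Type
  | prop : ℕ → MF
  | bot : MF
  | neg : MF → MF
  | or : MF → MF → MF
  | and : MF → MF → MF
  | dia : MF → MF
  | box : MF → MF

def MF.top : MF := MF.neg MF.bot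

def wSat {W : Type} (M : KModel W) : W → MF → Prop
  | w, .prop p => w ∈ M.V p
  | _, .bot => False
  | w, .neg a => ¬ wSat M w a
  | w, .or a b => wSat M w a ∨ wSat M w b
  | w, .and a b => wSat M w a ∧ wSat M w b
  | w, .dia a => ∃ v, M.R w v ∧ wSat M v a
  | w, .box a => ∀ v, M.R w v → wSat M v a

inductive IncForm : Type
  | prop : ℕ → IncForm
  | bot : IncForm
  | incl : List MF → List MF → IncForm
  | neg : MF → IncForm
  | or : IncForm → IncForm → IncForm
  | and : IncForm → IncForm → IncForm
  | dia : IncForm → IncForm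
  | box : IncForm → IncForm

/-- image R[T] -/
def img {W : Type} (M : KModel W) (T : Set W) : Set W := {v | ∃ w ∈ T, M.R w v}

/-- successor team relation: S ⊆ R[T] and T ⊆ R⁻¹[S] -/
def succTeam {W : Type} (M : KModel W) (T S : Set W) : Prop :=
  (∀ v ∈ S, ∃ w ∈ T, M.R w v) ∧ (∀ w ∈ T, ∃ v ∈ S, M.R w v)

def TSat {W : Type} (M : KModel W) : Set W → IncForm → Prop
  | T, .prop p => T ⊆ M.V p
  | T, .bot => T = ∅
  | T, .incl as bs => ∀ w ∈ T, ∃ v ∈ T, ∀ i, ∀ (h1 : i < as.length) (h2 : i < bs.length),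
      (wSat M w (as.get ⟨i, h1⟩) ↔ wSat M v (bs.get ⟨i, h2⟩))
  | T, .neg a => ∀ w ∈ T, ¬ wSat M w a
  | T, .or f g => ∃ T1 T2, T1 ∪ T2 = T ∧ TSat M T1 f ∧ TSat M T2 g
  | T, .and f g => TSat M T f ∧ TSat M T g
  | T, .dia f => ∃ S, succTeam M T S ∧ TSat M S f
  | T, .box f => TSat M (img M T) f

/-- embedding of classical formulas into ML(⊆) -/
def toInc : MF → IncForm
  | .prop p => .prop p
  | .bot => .bot
  | .neg a => .neg a
  | .or a b => .or (toInc a) (toInc b)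
  | .and a b => .and (toInc a) (toInc b)
  | .dia a => .dia (toInc a)
  | .box a => .box (toInc a)

/-- translate a Boolean constant to ⊤ or ⊥ -/
def ofBool : Bool → MF := fun x => if x then MF.top else MF.bot

/-- α^⊤ = α, α^⊥ = ¬α -/
def signed : Bool → MF → MF := fun x a => if x then a else a.neg

/-- a^x = α₁^{x₁} ∧ ... ∧ αₙ^{xₙ} -/
def conjSigned (xs : List Bool) (as : List MF) : MF :=
  (List.zipWith signed xs as).foldr MF.and MF.top


theorem list_get_map {α β : Type*} (f : α → β) {l : List α} {n : Fin (l.map f).length} :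
    (l.map f).get n = f (l.get ⟨n, List.length_map (f := f) (as := l) ▸ n.2⟩) := by
  simp

lemma wSat_ofBool {W : Type} (M : KModel W) (w : W) (x : Bool) :
    wSat M w (ofBool x) ↔ x = true := by
  cases x <;> simp [ofBool, MF.top, wSat]

lemma wSat_signed {W : Type} (M : KModel W) (w : W) (x : Bool) (a : MF) :
    wSat M w (signed x a) ↔ (wSat M w a ↔ x = true) := by
  cases x <;> simp [signed, wSat]

lemma wSat_conjSigned {W : Type} (M : KModel W) (w : W) :
    ∀ (xs : List Bool) (as : List MF),
      wSat M w (conjSigned xs as) ↔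
        ∀ i (h1 : i < xs.length) (h2 : i < as.length),
          (wSat M w (as.get ⟨i, h2⟩) ↔ xs.get ⟨i, h1⟩ = true)
  | [], as => by simp [conjSigned, MF.top, wSat]
  | x :: xs, [] => by simp [conjSigned, MF.top, wSat]
  | x :: xs, a :: as => by
    have ih := wSat_conjSigned (M := M) (w := w) xs as
    constructor
    · rintro ⟨h0, hrest⟩ i h1 h2
      cases i with
      | zero => simpa [wSat_signed] using h0
      | succ n =>
        exact (ih.1 hrest) n (Nat.lt_of_succ_lt_succ h1) (Nat.lt_of_succ_lt_succ h2)
    · intro h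
      refine ⟨?_, ih.2 ?_⟩
      · simpa [wSat_signed] using h 0 (Nat.succ_pos _) (Nat.succ_pos _)
      · intro n h1 h2
        exact h (n+1) (Nat.succ_lt_succ h1) (Nat.succ_lt_succ h2)

theorem stmt6 {W : Type} (M : KModel W) (T : Set W)
    (as bs : List MF) (hlen : as.length = bs.length) :
    TSat M T (.incl as bs) ↔
      ∀ xs : List Bool, xs.length = as.length →
        TSat M T (.or (.neg (conjSigned xs as)) (.incl (xs.map ofBool) bs)) := by
  constructor
  · intro hL xs hxs
    classical
    refine ⟨{w ∈ T | ¬ wSat M w (conjSigned xs as)},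
      {w ∈ T | wSat M w (conjSigned xs as)} ∪
      {v ∈ T | ∀ i (h1 : i < xs.length) (h2 : i < bs.length),
        (xs.get ⟨i, h1⟩ = true ↔ wSat M v (bs.get ⟨i, h2⟩))}, ?_, ?_, ?_⟩
    · ext w
      simp only [Set.mem_union, Set.mem_setOf_eq]
      by_cases h : wSat M w (conjSigned xs as) <;> tauto
    · intro w hw
      exact hw.2
    · intro w hw
      rcases hw with ⟨hwT, hwc⟩ | ⟨hwT, hwb⟩
      · obtain ⟨v, hvT, hv⟩ := hL w hwT
        have hvb : ∀ i (h1 : i < xs.length) (h2 : i < bs.length),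
            (xs.get ⟨i, h1⟩ = true ↔ wSat M v (bs.get ⟨i, h2⟩)) := by
          intro i h1 h2
          have h2a : i < as.length := by omega
          have := (wSat_conjSigned M w xs as).1 hwc i h1 h2a
          exact this.symm.trans (hv i h2a h2)
        refine ⟨v, Or.inr ⟨hvT, hvb⟩, ?_⟩
        intro i h1 h2
        have h1' : i < xs.length := by simpa using h1
        rw [list_get_map]
        simpa [wSat_ofBool] using hvb i h1' h2
      · refine ⟨w, Or.inr ⟨hwT, hwb⟩, ?_⟩
        intro i h1 h2
        have h1' : i < xs.length := by simpa using h1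
        rw [list_get_map]
        simpa [wSat_ofBool] using hwb i h1' h2
  · intro hR w hwT
    classical
    set xs : List Bool := as.map (fun a => decide (wSat M w a)) with hxsdef
    have hxs : xs.length = as.length := by simp [hxsdef]
    obtain ⟨T1, T2, hU, h1, h2⟩ := hR xs hxs
    have hwc : wSat M w (conjSigned xs as) := by
      rw [wSat_conjSigned]
      intro i hi1 hi2
      simp [hxsdef, list_get_map]
    have hwT2 : w ∈ T2 := by
      have : w ∈ T1 ∪ T2 := hU ▸ hwT
      rcases this with h | h
      · exact absurd hwc (h1 w h)
      · exact h
    obtain ⟨v, hvT2, hv⟩ := h2 w hwT2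
    have hvT : v ∈ T := by
      rw [← hU]; exact Or.inr hvT2
    refine ⟨v, hvT, ?_⟩
    intro i hi1 hi2
    have hi1' : i < (xs.map ofBool).length := by simp [hxs]; omega
    have := hv i hi1' hi2
    rw [list_get_map, wSat_ofBool] at this
    rw [← this]
    simp [hxsdef, list_get_map]
end

section
/- For any classical modal formula α, the following three formulas are semantically equivalent over all Kripke models and teams: the inclusion atom ⊤ ⊆ α, the singular might formula ⩒α (satisfied by T iff T = ∅ or some w ∈ T has {w} ⊨ α), and the might formula ▽α (satisfied by T iff T = ∅ or some nonempty S ⊆ T has S ⊨ α). -/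
/-! Classical formulas are flat: a team satisfies `α` iff each of its worlds does. Hence
`⩒α` and `▽α` both say that `T` is empty or contains a world satisfying `α`, and so does
`⊤ ⊆ α`, since every world satisfies `⊤`. -/

theorem TSat_toInc_iff {W : Type} (M : KModel W) (α : MF) (T : Set W) :
    TSat M T (toInc α) ↔ ∀ w ∈ T, wSat M w α := by
  induction α generalizing T with
  | prop p => rfl
  | bot => simp [toInc, TSat, wSat, Set.eq_empty_iff_forall_notMem]
  | neg a => rfl
  | or a b iha ihb =>
    simp only [toInc, TSat, wSat, iha, ihb]
    constructor
    · rintro ⟨T₁, T₂, rfl, h₁, h₂⟩ w (hw | hw)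
      exacts [.inl (h₁ w hw), .inr (h₂ w hw)]
    · intro h
      refine ⟨{w ∈ T | wSat M w a}, {w ∈ T | wSat M w b}, ?_, fun w hw => hw.2,
        fun w hw => hw.2⟩
      rw [← Set.sep_or, Set.sep_eq_self_iff_mem_true.2 h]
  | and a b iha ihb =>
    simp only [toInc, TSat, wSat, iha, ihb]
    exact ⟨fun ⟨h₁, h₂⟩ w hw => ⟨h₁ w hw, h₂ w hw⟩,
      fun h => ⟨fun w hw => (h w hw).1, fun w hw => (h w hw).2⟩⟩
  | dia a ih =>
    simp only [toInc, TSat, wSat, ih]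
    constructor
    · rintro ⟨S, ⟨-, hTS⟩, hS⟩ w hw
      obtain ⟨v, hv, hwv⟩ := hTS w hw
      exact ⟨v, hwv, hS v hv⟩
    · intro h
      refine ⟨{v | ∃ w ∈ T, M.R w v ∧ wSat M v a}, ⟨?_, ?_⟩, fun v ⟨_, _, _, hv⟩ => hv⟩
      · rintro v ⟨w, hw, hwv, -⟩
        exact ⟨w, hw, hwv⟩
      · intro w hw
        obtain ⟨v, hwv, hv⟩ := h w hw
        exact ⟨v, ⟨w, hw, hwv, hv⟩, hwv⟩
  | box a ih =>
    simp only [toInc, TSat, wSat, ih, img]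
    exact ⟨fun h w hw v hwv => h v ⟨w, hw, hwv⟩, fun h v ⟨w, hw, hwv⟩ => h w hw v hwv⟩

theorem TSat_incl_top_iff {W : Type} (M : KModel W) (α : MF) (T : Set W) :
    TSat M T (.incl [MF.top] [α]) ↔ T = ∅ ∨ ∃ v ∈ T, wSat M v α := by
  have wSat_top (w : W) : wSat M w MF.top := fun h => h
  simp only [TSat, List.length_singleton, Nat.lt_one_iff, forall_eq, List.get_eq_getElem,
    List.getElem_singleton, wSat_top, true_iff, forall_const]
  rcases T.eq_empty_or_nonempty with rfl | ⟨w, hw⟩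
  · simp
  · exact ⟨fun h => .inr (h w hw),
      fun h _ _ => h.resolve_left (Set.nonempty_iff_ne_empty.1 ⟨w, hw⟩)⟩

theorem stmt8 (α : MF) (W : Type) (M : KModel W) (T : Set W) :
    (TSat M T (.incl [MF.top] [α]) ↔ (T = ∅ ∨ ∃ w ∈ T, TSat M {w} (toInc α)))
    ∧ (TSat M T (.incl [MF.top] [α]) ↔
        (T = ∅ ∨ ∃ S ⊆ T, S.Nonempty ∧ TSat M S (toInc α))) := by
  simp only [TSat_incl_top_iff, TSat_toInc_iff, Set.mem_singleton_iff, forall_eq, true_and]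
  refine or_congr_right ⟨?_, ?_⟩
  · rintro ⟨v, hv, hα⟩
    exact ⟨{v}, Set.singleton_subset_iff.2 hv, Set.singleton_nonempty v, fun w hw => hw ▸ hα⟩
  · rintro ⟨S, hST, ⟨v, hv⟩, hS⟩
    exact ⟨v, hST hv, hS v hv⟩
end

section
/- For any primitive inclusion atom x ⊆ a (x a sequence of constants from {⊤,⊥}, a a sequence of classical modal formulas), ◇(x ⊆ a) entails □(x ⊆ a): if a team T satisfies ◇(x ⊆ a), then T satisfies □(x ⊆ a). -/
theorem stmt11 {W : Type} (M : KModel W) (T : Set W)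
    (xs : List Bool) (as : List MF) (hlen : xs.length = as.length)
    (h : TSat M T (.dia (.incl (xs.map ofBool) as))) :
    TSat M T (.box (.incl (xs.map ofBool) as)) := by
  obtain ⟨S, hST, hS⟩ := h
  intro w hw
  obtain ⟨t, ht, _⟩ := hw
  obtain ⟨w0, hw0, _⟩ := hST.2 t ht
  obtain ⟨v, hvS, hv⟩ := hS w0 hw0
  refine ⟨v, hST.1 v hvS, ?_⟩
  intro i h1 h2
  have h1' : i < xs.length := by simpa using h1
  have key : ∀ (u : W), wSat M u ((xs.map ofBool).get ⟨i, h1⟩) ↔ xs.get ⟨i, h1'⟩ = true := by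
    intro u
    have : (xs.map ofBool).get ⟨i, h1⟩ = ofBool (xs.get ⟨i, h1'⟩) := by
      simp [List.getElem_map]
    rw [this]
    cases xs.get ⟨i, h1'⟩ <;> simp [ofBool, wSat, MF.top]
  rw [key w, ← key w0]
  exact hv i h1 h2
end

section
/- Team k-bisimilarity implies k-equivalence in modal inclusion logic: if (M,T) and (M',T') are team X,k-bisimilar, then for every ML(⊆)-formula φ over X with modal depth at most k, M,T ⊨ φ iff M',T' ⊨ φ. -/
/-- world X,k-bisimilarity between pointed models -/
def wBisim {W W' : Type} (M : KModel W) (M' : KModel W') (X : Set ℕ) :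
    ℕ → W → W' → Prop
  | 0, w, w' => ∀ p ∈ X, (w ∈ M.V p ↔ w' ∈ M'.V p)
  | k+1, w, w' =>
      (∀ p ∈ X, (w ∈ M.V p ↔ w' ∈ M'.V p))
      ∧ (∀ v, M.R w v → ∃ v', M'.R w' v' ∧ wBisim M M' X k v v')
      ∧ (∀ v', M'.R w' v' → ∃ v, M.R w v ∧ wBisim M M' X k v v')

/-- team X,k-bisimilarity -/
def tBisim {W W' : Type} (M : KModel W) (M' : KModel W') (X : Set ℕ) (k : ℕ)
    (T : Set W) (T' : Set W') : Prop :=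
  (∀ w ∈ T, ∃ w' ∈ T', wBisim M M' X k w w')
  ∧ (∀ w' ∈ T', ∃ w ∈ T, wBisim M M' X k w w')

def MF.md : MF → ℕ
  | .prop _ => 0
  | .bot => 0
  | .neg a => a.md
  | .or a b => max a.md b.md
  | .and a b => max a.md b.md
  | .dia a => a.md + 1
  | .box a => a.md + 1

def MF.props : MF → Set ℕ
  | .prop p => {p}
  | .bot => ∅
  | .neg a => a.props
  | .or a b => a.props ∪ b.props
  | .and a b => a.props ∪ b.props
  | .dia a => a.props
  | .box a => a.props

def IncForm.md : IncForm → ℕ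
  | .prop _ => 0
  | .bot => 0
  | .incl as bs => ((as ++ bs).map MF.md).foldr max 0
  | .neg a => a.md
  | .or f g => max f.md g.md
  | .and f g => max f.md g.md
  | .dia f => f.md + 1
  | .box f => f.md + 1

def IncForm.props : IncForm → Set ℕ
  | .prop p => {p}
  | .bot => ∅
  | .incl as bs => {p | ∃ a ∈ as ++ bs, p ∈ a.props}
  | .neg a => a.props
  | .or f g => f.props ∪ g.props
  | .and f g => f.props ∪ g.props
  | .dia f => f.props
  | .box f => f.props

section Aux

variable {W W' : Type} (M : KModel W) (M' : KModel W') (X : Set ℕ)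

lemma wBisim_atom : ∀ (k : ℕ) (w : W) (w' : W'), wBisim M M' X k w w' →
    ∀ p ∈ X, (w ∈ M.V p ↔ w' ∈ M'.V p)
  | 0, _, _, h => h
  | _+1, _, _, h => h.1

lemma wBisim_symm : ∀ (k : ℕ) (w : W) (w' : W'), wBisim M M' X k w w' →
    wBisim M' M X k w' w := by
  intro k
  induction k with
  | zero => intro w w' h p hp; exact (h p hp).symm
  | succ k ih =>
    intro w w' h
    refine ⟨fun p hp => (h.1 p hp).symm, fun v' hv' => ?_, fun v hv => ?_⟩
    · obtain ⟨v, hv, hb⟩ := h.2.2 v' hv'; exact ⟨v, hv, ih _ _ hb⟩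
    · obtain ⟨v', hv', hb⟩ := h.2.1 v hv; exact ⟨v', hv', ih _ _ hb⟩

lemma wBisim_step : ∀ (k : ℕ) (w : W) (w' : W'), wBisim M M' X (k+1) w w' →
    wBisim M M' X k w w' := by
  intro k
  induction k with
  | zero => intro w w' h; exact h.1
  | succ k ih =>
    intro w w' h
    refine ⟨h.1, fun v hv => ?_, fun v' hv' => ?_⟩
    · obtain ⟨v', hv', hb⟩ := h.2.1 v hv; exact ⟨v', hv', ih _ _ hb⟩
    · obtain ⟨v, hv, hb⟩ := h.2.2 v' hv'; exact ⟨v, hv, ih _ _ hb⟩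

lemma wBisim_mono : ∀ (k j : ℕ), j ≤ k → ∀ (w : W) (w' : W'),
    wBisim M M' X k w w' → wBisim M M' X j w w' := by
  intro k
  induction k with
  | zero => intro j hj w w' h; obtain rfl := Nat.le_zero.mp hj; exact h
  | succ k ih =>
    intro j hj w w' h
    rcases Nat.lt_or_ge j (k+1) with hl | hg
    · exact ih j (Nat.lt_succ_iff.mp hl) w w' (wBisim_step M M' X k w w' h)
    · obtain rfl := le_antisymm hj hg; exact h

lemma wlem : ∀ (a : MF) (k : ℕ) (w : W) (w' : W'), a.md ≤ k → a.props ⊆ X →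
    wBisim M M' X k w w' → (wSat M w a ↔ wSat M' w' a) := by
  intro a
  induction a with
  | prop p =>
    intro k w w' _ hp hb
    simpa [wSat] using wBisim_atom M M' X k w w' hb p (hp rfl)
  | bot => intro k w w' _ _ _; simp [wSat]
  | neg a ih =>
    intro k w w' hmd hp hb
    simp only [wSat]
    exact not_congr (ih k w w' hmd hp hb)
  | or a b iha ihb =>
    intro k w w' hmd hp hb
    simp only [wSat]
    have hmd' : max a.md b.md ≤ k := hmd
    exact or_congr
      (iha k w w' (le_trans (le_max_left _ _) hmd') (fun p hp' => hp (Or.inl hp')) hb)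
      (ihb k w w' (le_trans (le_max_right _ _) hmd') (fun p hp' => hp (Or.inr hp')) hb)
  | and a b iha ihb =>
    intro k w w' hmd hp hb
    simp only [wSat]
    have hmd' : max a.md b.md ≤ k := hmd
    exact and_congr
      (iha k w w' (le_trans (le_max_left _ _) hmd') (fun p hp' => hp (Or.inl hp')) hb)
      (ihb k w w' (le_trans (le_max_right _ _) hmd') (fun p hp' => hp (Or.inr hp')) hb)
  | dia a ih =>
    intro k w w' hmd hp hb
    have hmd' : a.md + 1 ≤ k := hmd
    obtain ⟨j, rfl⟩ : ∃ j, k = j + 1 := ⟨k - 1, by omega⟩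
    simp only [wSat]
    constructor
    · rintro ⟨v, hv, hs⟩
      obtain ⟨v', hv', hbv⟩ := hb.2.1 v hv
      exact ⟨v', hv', (ih j v v' (by omega) hp hbv).mp hs⟩
    · rintro ⟨v', hv', hs⟩
      obtain ⟨v, hv, hbv⟩ := hb.2.2 v' hv'
      exact ⟨v, hv, (ih j v v' (by omega) hp hbv).mpr hs⟩
  | box a ih =>
    intro k w w' hmd hp hb
    have hmd' : a.md + 1 ≤ k := hmd
    obtain ⟨j, rfl⟩ : ∃ j, k = j + 1 := ⟨k - 1, by omega⟩
    simp only [wSat]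
    constructor
    · intro hs v' hv'
      obtain ⟨v, hv, hbv⟩ := hb.2.2 v' hv'
      exact (ih j v v' (by omega) hp hbv).mp (hs v hv)
    · intro hs v hv
      obtain ⟨v', hv', hbv⟩ := hb.2.1 v hv
      exact (ih j v v' (by omega) hp hbv).mpr (hs v' hv')

lemma list_le_foldr_max : ∀ (l : List ℕ) (x : ℕ), x ∈ l → x ≤ l.foldr max 0 := by
  intro l
  induction l with
  | nil => intro x h; cases h
  | cons a l ih =>
    intro x h
    rcases List.mem_cons.mp h with rfl | h
    · exact le_max_left _ _
    · exact le_trans (ih x h) (le_max_right _ _)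

lemma tBisim_symm {k : ℕ} {T : Set W} {T' : Set W'} (h : tBisim M M' X k T T') :
    tBisim M' M X k T' T := by
  refine ⟨fun w' hw' => ?_, fun w hw => ?_⟩
  · obtain ⟨w, hw, hb⟩ := h.2 w' hw'; exact ⟨w, hw, wBisim_symm M M' X k w w' hb⟩
  · obtain ⟨w', hw', hb⟩ := h.1 w hw; exact ⟨w', hw', wBisim_symm M M' X k w w' hb⟩

lemma tlem : ∀ (φ : IncForm) (k : ℕ) (T : Set W) (T' : Set W'),
    tBisim M M' X k T T' → φ.props ⊆ X → φ.md ≤ k → TSat M T φ → TSat M' T' φ := by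
  intro φ
  induction φ with
  | prop p =>
    intro k T T' hb hp _ hs w' hw'
    obtain ⟨w, hw, hbw⟩ := hb.2 w' hw'
    exact (wBisim_atom M M' X k w w' hbw p (hp rfl)).mp (hs hw)
  | bot =>
    intro k T T' hb _ _ hs
    show T' = ∅
    have hs' : T = ∅ := hs
    rw [Set.eq_empty_iff_forall_notMem]
    intro w' hw'
    obtain ⟨w, hw, _⟩ := hb.2 w' hw'
    rw [hs'] at hw
    exact hw
  | incl as bs =>
    intro k T T' hb hp hmd hs w' hw'
    obtain ⟨w, hw, hbw⟩ := hb.2 w' hw'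
    obtain ⟨v, hv, hiff⟩ := hs w hw
    obtain ⟨v', hv', hbv⟩ := hb.1 v hv
    refine ⟨v', hv', fun i h1 h2 => ?_⟩
    have hmda : (as.get ⟨i, h1⟩).md ≤ k := by
      refine le_trans (list_le_foldr_max _ _ ?_) hmd
      exact List.mem_map_of_mem (f := MF.md) (List.mem_append.mpr (Or.inl (as.get_mem ⟨i, h1⟩)))
    have hmdb : (bs.get ⟨i, h2⟩).md ≤ k := by
      refine le_trans (list_le_foldr_max _ _ ?_) hmd
      exact List.mem_map_of_mem (f := MF.md) (List.mem_append.mpr (Or.inr (bs.get_mem ⟨i, h2⟩)))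
    have hpa : (as.get ⟨i, h1⟩).props ⊆ X := fun p hp' =>
      hp ⟨as.get ⟨i, h1⟩, List.mem_append.mpr (Or.inl (as.get_mem ⟨i, h1⟩)), hp'⟩
    have hpb : (bs.get ⟨i, h2⟩).props ⊆ X := fun p hp' =>
      hp ⟨bs.get ⟨i, h2⟩, List.mem_append.mpr (Or.inr (bs.get_mem ⟨i, h2⟩)), hp'⟩
    calc wSat M' w' (as.get ⟨i, h1⟩)
        ↔ wSat M w (as.get ⟨i, h1⟩) := (wlem M M' X _ k w w' hmda hpa hbw).symm
      _ ↔ wSat M v (bs.get ⟨i, h2⟩) := hiff i h1 h2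
      _ ↔ wSat M' v' (bs.get ⟨i, h2⟩) := wlem M M' X _ k v v' hmdb hpb hbv
  | neg a =>
    intro k T T' hb hp hmd hs w' hw' hsat
    obtain ⟨w, hw, hbw⟩ := hb.2 w' hw'
    exact hs w hw ((wlem M M' X a k w w' hmd hp hbw).mpr hsat)
  | or f g ihf ihg =>
    intro k T T' hb hp hmd hs
    obtain ⟨T1, T2, hun, h1, h2⟩ := hs
    have hmd' : max f.md g.md ≤ k := hmd
    refine ⟨{w' ∈ T' | ∃ w ∈ T1, wBisim M M' X k w w'},
            {w' ∈ T' | ∃ w ∈ T2, wBisim M M' X k w w'}, ?_, ?_, ?_⟩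
    · apply Set.eq_of_subset_of_subset
      · rintro w' (⟨hw', _⟩ | ⟨hw', _⟩) <;> exact hw'
      · intro w' hw'
        obtain ⟨w, hw, hbw⟩ := hb.2 w' hw'
        rw [← hun] at hw
        rcases hw with hw | hw
        · exact Or.inl ⟨hw', w, hw, hbw⟩
        · exact Or.inr ⟨hw', w, hw, hbw⟩
    · refine ihf k T1 _ ⟨fun w hw => ?_, fun w' hw' => hw'.2⟩
        (fun p hp' => hp (Or.inl hp')) (le_trans (le_max_left _ _) hmd') h1
      obtain ⟨w', hw', hbw⟩ := hb.1 w (hun ▸ Set.mem_union_left _ hw)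
      exact ⟨w', ⟨hw', w, hw, hbw⟩, hbw⟩
    · refine ihg k T2 _ ⟨fun w hw => ?_, fun w' hw' => hw'.2⟩
        (fun p hp' => hp (Or.inr hp')) (le_trans (le_max_right _ _) hmd') h2
      obtain ⟨w', hw', hbw⟩ := hb.1 w (hun ▸ Set.mem_union_right _ hw)
      exact ⟨w', ⟨hw', w, hw, hbw⟩, hbw⟩
  | and f g ihf ihg =>
    intro k T T' hb hp hmd hs
    have hmd' : max f.md g.md ≤ k := hmd
    exact ⟨ihf k T T' hb (fun p hp' => hp (Or.inl hp'))
        (le_trans (le_max_left _ _) hmd') hs.1,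
      ihg k T T' hb (fun p hp' => hp (Or.inr hp'))
        (le_trans (le_max_right _ _) hmd') hs.2⟩
  | dia f ih =>
    intro k T T' hb hp hmd hs
    obtain ⟨S, hst, hS⟩ := hs
    have hmd' : f.md + 1 ≤ k := hmd
    obtain ⟨j, rfl⟩ : ∃ j, k = j + 1 := ⟨k - 1, by omega⟩
    refine ⟨{v' | (∃ w' ∈ T', M'.R w' v') ∧ ∃ v ∈ S, wBisim M M' X j v v'},
      ⟨fun v' hv' => hv'.1, fun w' hw' => ?_⟩, ?_⟩
    · obtain ⟨w, hw, hbw⟩ := hb.2 w' hw'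
      obtain ⟨v, hv, hr⟩ := hst.2 w hw
      obtain ⟨v', hr', hbv⟩ := hbw.2.1 v hr
      exact ⟨v', ⟨⟨w', hw', hr'⟩, v, hv, hbv⟩, hr'⟩
    · refine ih j S _ ⟨fun v hv => ?_, fun v' hv' => hv'.2⟩ hp (by omega) hS
      obtain ⟨w, hw, hr⟩ := hst.1 v hv
      obtain ⟨w', hw', hbw⟩ := hb.1 w hw
      obtain ⟨v', hr', hbv⟩ := hbw.2.1 v hr
      exact ⟨v', ⟨⟨w', hw', hr'⟩, v, hv, hbv⟩, hbv⟩
  | box f ih =>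
    intro k T T' hb hp hmd hs
    have hmd' : f.md + 1 ≤ k := hmd
    obtain ⟨j, rfl⟩ : ∃ j, k = j + 1 := ⟨k - 1, by omega⟩
    refine ih j (img M T) (img M' T') ⟨fun v hv => ?_, fun v' hv' => ?_⟩ hp (by omega) hs
    · obtain ⟨w, hw, hr⟩ := hv
      obtain ⟨w', hw', hbw⟩ := hb.1 w hw
      obtain ⟨v', hr', hbv⟩ := hbw.2.1 v hr
      exact ⟨v', ⟨w', hw', hr'⟩, hbv⟩
    · obtain ⟨w', hw', hr'⟩ := hv'
      obtain ⟨w, hw, hbw⟩ := hb.2 w' hw'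
      obtain ⟨v, hr, hbv⟩ := hbw.2.2 v' hr'
      exact ⟨v, ⟨w, hw, hr⟩, hbv⟩

end Aux

theorem stmt13 {W W' : Type} (M : KModel W) (M' : KModel W')
    (X : Set ℕ) (hX : X.Finite) (k : ℕ) (T : Set W) (T' : Set W')
    (hb : tBisim M M' X k T T')
    (φ : IncForm) (hprops : φ.props ⊆ X) (hmd : φ.md ≤ k) :
    TSat M T φ ↔ TSat M' T' φ :=
  ⟨tlem M M' X φ k T T' hb hprops hmd,
   tlem M' M X φ k T' T (tBisim_symm M M' X hb) hprops hmd⟩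
end

section
/- If teams T and T' are (k+1)-bisimilar, then for every successor team S of T (i.e., S ⊆ R[T] and T ⊆ R^{-1}[S]) there exists a successor team S' of T' such that S and S' are k-bisimilar. -/
/-! Take for `S'` the successors of `T'` that are `k`-bisimilar to some member of `S`.
Every `v ∈ S` has a predecessor `w ∈ T`, `w` has a `(k+1)`-bisimilar partner `w' ∈ T'`, and the
forth condition at `(w, w')` gives a successor of `w'` that is `k`-bisimilar to `v`. Conversely,
each `w' ∈ T'` has a partner `w ∈ T`, `w` has a successor in `S`, and the same forth step turns
it into a successor of `w'` lying in `S'`. -/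

section

variable {W W' : Type} {M : KModel W} {M' : KModel W'} {X : Set ℕ} {k : ℕ}

theorem wBisim.forth {w v : W} {w' : W'} (h : wBisim M M' X (k+1) w w') (hv : M.R w v) :
    ∃ v', M'.R w' v' ∧ wBisim M M' X k v v' :=
  h.2.1 v hv

def bisimSuccs (M : KModel W) (M' : KModel W') (X : Set ℕ) (k : ℕ) (S : Set W) (T' : Set W') :
    Set W' :=
  {v' | v' ∈ img M' T' ∧ ∃ v ∈ S, wBisim M M' X k v v'}

theorem succTeam_bisimSuccs {T S : Set W} {T' : Set W'} (hb : tBisim M M' X (k+1) T T')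
    (hS : succTeam M T S) : succTeam M' T' (bisimSuccs M M' X k S T') := by
  refine ⟨fun v' hv' => hv'.1, fun w' hw' => ?_⟩
  obtain ⟨w, hw, hww'⟩ := hb.2 w' hw'
  obtain ⟨v, hv, hwv⟩ := hS.2 w hw
  obtain ⟨v', hw'v', hvv'⟩ := hww'.forth hwv
  exact ⟨v', ⟨⟨w', hw', hw'v'⟩, v, hv, hvv'⟩, hw'v'⟩

theorem tBisim_bisimSuccs {T S : Set W} {T' : Set W'} (hb : tBisim M M' X (k+1) T T')
    (hS : succTeam M T S) : tBisim M M' X k S (bisimSuccs M M' X k S T') := by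
  refine ⟨fun v hv => ?_, fun v' hv' => hv'.2⟩
  obtain ⟨w, hw, hwv⟩ := hS.1 v hv
  obtain ⟨w', hw', hww'⟩ := hb.1 w hw
  obtain ⟨v', hw'v', hvv'⟩ := hww'.forth hwv
  exact ⟨v', ⟨⟨w', hw', hw'v'⟩, v, hv, hvv'⟩, hvv'⟩

end

theorem stmt15 {W W' : Type} (M : KModel W) (M' : KModel W')
    (X : Set ℕ) (k : ℕ) (T : Set W) (T' : Set W')
    (hb : tBisim M M' X (k+1) T T') :
    ∀ S : Set W, succTeam M T S →
      ∃ S' : Set W', succTeam M' T' S' ∧ tBisim M M' X k S S' :=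
  fun S hS => ⟨bisimSuccs M M' X k S T', succTeam_bisimSuccs hb hS, tBisim_bisimSuccs hb hS⟩
end

section
/- If teams T and T' are (k)-bisimilar (k ≥ 0 arbitrary, including k+1 form), then for every splitting T = T_1 ∪ T_2 with T_1,T_2 ⊆ T there exist T_1',T_2' ⊆ T' with T_1' ∪ T_2' = T' such that T_i and T_i' are k-bisimilar for i = 1,2. -/
section BiTotalOn

variable {α β : Type*} (r : α → β → Prop)

def BiTotalOn (s : Set α) (t : Set β) : Prop :=
  (∀ a ∈ s, ∃ b ∈ t, r a b) ∧ (∀ b ∈ t, ∃ a ∈ s, r a b)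

variable {r} {s s₁ s₂ : Set α} {t : Set β}

theorem BiTotalOn.restrict (h : BiTotalOn r s t) (hs : s₁ ⊆ s) :
    BiTotalOn r s₁ {b ∈ t | ∃ a ∈ s₁, r a b} := by
  constructor
  · intro a ha
    obtain ⟨b, hb, hab⟩ := h.1 a (hs ha)
    exact ⟨b, ⟨hb, a, ha, hab⟩, hab⟩
  · rintro b ⟨-, a, ha, hab⟩
    exact ⟨a, ha, hab⟩

theorem BiTotalOn.restrict_union_restrict (h : BiTotalOn r s t) (hu : s₁ ∪ s₂ = s) :
    {b ∈ t | ∃ a ∈ s₁, r a b} ∪ {b ∈ t | ∃ a ∈ s₂, r a b} = t := by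
  refine Set.Subset.antisymm (Set.union_subset (Set.sep_subset _ _) (Set.sep_subset _ _)) ?_
  intro b hb
  obtain ⟨a, ha, hab⟩ := h.2 b hb
  rw [← hu] at ha
  rcases ha with ha₁ | ha₂
  · exact Or.inl ⟨hb, a, ha₁, hab⟩
  · exact Or.inr ⟨hb, a, ha₂, hab⟩

theorem BiTotalOn.exists_union_eq (h : BiTotalOn r s t) (hu : s₁ ∪ s₂ = s) :
    ∃ t₁ t₂ : Set β, t₁ ⊆ t ∧ t₂ ⊆ t ∧ t₁ ∪ t₂ = t ∧
      BiTotalOn r s₁ t₁ ∧ BiTotalOn r s₂ t₂ :=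
  ⟨_, _, Set.sep_subset _ _, Set.sep_subset _ _, h.restrict_union_restrict hu,
    h.restrict (hu ▸ Set.subset_union_left), h.restrict (hu ▸ Set.subset_union_right)⟩

end BiTotalOn

theorem stmt16 {W W' : Type} (M : KModel W) (M' : KModel W')
    (X : Set ℕ) (k : ℕ) (T : Set W) (T' : Set W')
    (hb : tBisim M M' X k T T') :
    ∀ T1 T2 : Set W, T1 ⊆ T → T2 ⊆ T → T1 ∪ T2 = T →
      ∃ T1' T2' : Set W', T1' ⊆ T' ∧ T2' ⊆ T' ∧ T1' ∪ T2' = T'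
        ∧ tBisim M M' X k T1 T1' ∧ tBisim M M' X k T2 T2' := by
  intro T1 T2 _ _ hu
  -- `tBisim M M' X k` unfolds to `BiTotalOn (wBisim M M' X k)`.
  exact BiTotalOn.exists_union_eq (r := wBisim M M' X k) hb hu
end
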